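/- There are K = K_b + K_m clients (1 ≤ K_m < K_b), clients 1,…,K_b benign and clients K_b+1,…,K malicious, each with a characterization vector v^(k) ∈ ℝ^H. Fix an integer p ≥ 1 and suppose ‖v^(k) − v̄‖_p ≤ r for every benign k ∈ {1,…,K_b}, where v̄ ∈ ℝ^H and r ≥ 0. Let B be a set of K_b client indices whose maliciousness scores are the K_b smallest (i.e. M(k) ≤ M(k') for every k ∈ B and k' ∉ B). Then every malicious client m ∈ B ∩ {K_b+1,…,K} satisfies ‖v^(m) − v̄‖_p ≤ 2(K_b−1)·r/(K_b−K_m) + r. -/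

import Mathlib

/-! A benign client `b` outside `B` exists, because `B` has `K_b` members and one of them, `m`,
is malicious. The other `K_b - 1` benign clients lie within `2r` of `b`, so `M(b) ≤ 2r`, and
hence `M(m) ≤ M(b) ≤ 2r`. On the other hand any `K_b - 1` clients other than `m` include at
least `K_b - K_m` benign ones, each at distance at least `‖v⁽ᵐ⁾ - v̄‖_p - r` from `m`, so
`(K_b - K_m)(‖v⁽ᵐ⁾ - v̄‖_p - r) ≤ (K_b - 1) M(m) ≤ 2 (K_b - 1) r`. -/

open Finset

/-- The ℓ_p norm on `ℝ^H` for an integer `p ≥ 1`. -/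
noncomputable def lpNorm {H : ℕ} (p : ℕ) (x : Fin H → ℝ) : ℝ :=
  (∑ i, |x i| ^ p) ^ ((1 : ℝ) / p)

/-- The maliciousness score of client `k`: `1/t` times the sum of the `t` smallest values
among the distances `d k k'` for `k' ≠ k` (the minimum over size-`t` subsets of the sum). -/
noncomputable def malScore {K : ℕ} (d : Fin K → Fin K → ℝ) (t : ℕ) (k : Fin K) : ℝ :=
  sInf {x : ℝ | ∃ S : Finset (Fin K),
    S ⊆ Finset.univ.erase k ∧ S.card = t ∧ x = ∑ k' ∈ S, d k k'} / t

section lpNorm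

variable {H : ℕ} {p : ℕ}

lemma lpNorm_nonneg (p : ℕ) (x : Fin H → ℝ) : 0 ≤ lpNorm p x :=
  Real.rpow_nonneg (sum_nonneg fun _ _ => pow_nonneg (abs_nonneg _) _) _

lemma lpNorm_sub_comm (p : ℕ) (x y : Fin H → ℝ) :
    lpNorm p (fun i => x i - y i) = lpNorm p (fun i => y i - x i) := by
  simp only [lpNorm, abs_sub_comm]

lemma lpNorm_add_le (hp : 1 ≤ p) (x y : Fin H → ℝ) :
    lpNorm p (fun i => x i + y i) ≤ lpNorm p x + lpNorm p y := by
  simpa [lpNorm, ← Real.rpow_natCast] using Real.Lp_add_le univ x y (by exact_mod_cast hp)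

lemma lpNorm_sub_le_sub_add_sub (hp : 1 ≤ p) (x y z : Fin H → ℝ) :
    lpNorm p (fun i => x i - z i) ≤
      lpNorm p (fun i => x i - y i) + lpNorm p (fun i => y i - z i) := by
  simpa only [sub_add_sub_cancel] using lpNorm_add_le hp (fun i => x i - y i) (fun i => y i - z i)

lemma lpNorm_sub_le_add_of_le (hp : 1 ≤ p) {x y c : Fin H → ℝ} {r s : ℝ}
    (hx : lpNorm p (fun i => x i - c i) ≤ r) (hy : lpNorm p (fun i => y i - c i) ≤ s) :
    lpNorm p (fun i => x i - y i) ≤ r + s := by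
  have := lpNorm_sub_le_sub_add_sub hp x c y
  rw [lpNorm_sub_comm p c] at this
  linarith

lemma lpNorm_sub_sub_le (hp : 1 ≤ p) {x y c : Fin H → ℝ} {s : ℝ}
    (hy : lpNorm p (fun i => y i - c i) ≤ s) :
    lpNorm p (fun i => x i - c i) - s ≤ lpNorm p (fun i => x i - y i) := by
  linarith [lpNorm_sub_le_sub_add_sub hp x y c]

end lpNorm

lemma Finset.exists_mem_notMem_of_card_le_of_mem_notMem {α : Type*} {s t : Finset α} {a : α}
    (h : #s ≤ #t) (has : a ∈ s) (hat : a ∉ t) : ∃ b ∈ t, b ∉ s := by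
  obtain ⟨b, hb, hbs⟩ := exists_mem_notMem_of_card_lt_card (s := s) (t := cons a t hat)
    (by rw [card_cons]; omega)
  exact ⟨b, (mem_cons.1 hb).resolve_left (by rintro rfl; exact hbs has), hbs⟩

section malScore

variable {K : ℕ} (d : Fin K → Fin K → ℝ) {t : ℕ} (k : Fin K)

lemma malScore_eq_sInf_image :
    malScore d t k =
      sInf ↑(((univ.erase k).powersetCard t).image fun S => ∑ k' ∈ S, d k k') / t := by
  unfold malScore
  congr 2
  ext x
  simp [eq_comm, and_assoc]

lemma malScore_le_sum_div {S : Finset (Fin K)} (hS : S ⊆ univ.erase k) (hcard : #S = t) :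
    malScore d t k ≤ (∑ k' ∈ S, d k k') / t := by
  rw [malScore_eq_sInf_image]
  gcongr
  exact csInf_le (Finset.bddBelow _) (mem_image_of_mem _ (mem_powersetCard.2 ⟨hS, hcard⟩))

lemma exists_malScore_eq_sum_div (ht : t ≤ K - 1) :
    ∃ S ⊆ univ.erase k, #S = t ∧ malScore d t k = (∑ k' ∈ S, d k k') / t := by
  have hne : ((univ.erase k).powersetCard t).Nonempty := by
    rw [powersetCard_nonempty, card_erase_of_mem (mem_univ k), card_univ, Fintype.card_fin]
    exact ht
  obtain ⟨S, hS, hS_eq⟩ := mem_image.1 (hne.image fun S => ∑ k' ∈ S, d k k').csInf_mem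
  obtain ⟨hS_sub, hS_card⟩ := mem_powersetCard.1 hS
  exact ⟨S, hS_sub, hS_card, by rw [malScore_eq_sInf_image, hS_eq]⟩

lemma malScore_le_of_forall_le (ht : 0 < t) {S : Finset (Fin K)} (hS : S ⊆ univ.erase k)
    (hcard : #S = t) {c : ℝ} (hc : ∀ k' ∈ S, d k k' ≤ c) : malScore d t k ≤ c := by
  have hsum : ∑ k' ∈ S, d k k' ≤ t * c := by
    simpa [hcard] using sum_le_card_nsmul S (d k) c hc
  calc malScore d t k ≤ (∑ k' ∈ S, d k k') / t := malScore_le_sum_div d k hS hcard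
    _ ≤ c := by rw [div_le_iff₀ (by exact_mod_cast ht)]; linarith

/-- A `t`-subset of `univ.erase k` meets `A` in at least `t + 1 - #Aᶜ` points, as `k ∈ Aᶜ`. -/
lemma sub_card_compl_mul_le_mul_malScore (ht : 0 < t) (ht' : t ≤ K - 1) (hd : ∀ j, 0 ≤ d k j)
    {A : Finset (Fin K)} (hk : k ∉ A) {a : ℝ} (ha : 0 ≤ a) (hA : ∀ j ∈ A, a ≤ d k j) :
    ((t + 1 : ℝ) - #Aᶜ) * a ≤ t * malScore d t k := by
  obtain ⟨S, hS_sub, hS_card, hS_eq⟩ := exists_malScore_eq_sum_div d k ht'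
  have hcount : (t + 1 : ℝ) - #Aᶜ ≤ #(S ∩ A) := by
    have hsplit := card_inter_add_card_sdiff S A
    have hout : #(S \ A) + 1 ≤ #Aᶜ := by
      rw [← card_erase_add_one (mem_compl.2 hk)]
      refine Nat.add_le_add_right (card_le_card fun j hj => ?_) 1
      obtain ⟨hjS, hjA⟩ := mem_sdiff.1 hj
      exact mem_erase.2 ⟨ne_of_mem_erase (hS_sub hjS), mem_compl.2 hjA⟩
    have : t + 1 ≤ #(S ∩ A) + #Aᶜ := by omega
    linarith [show (t + 1 : ℝ) ≤ #(S ∩ A) + #Aᶜ by exact_mod_cast this]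
  calc ((t + 1 : ℝ) - #Aᶜ) * a ≤ #(S ∩ A) * a := by gcongr
    _ ≤ ∑ j ∈ S ∩ A, d k j := by
      simpa using card_nsmul_le_sum (S ∩ A) (d k) a fun j hj => hA j (mem_inter.1 hj).2
    _ ≤ ∑ j ∈ S, d k j := sum_le_sum_of_subset_of_nonneg inter_subset_left fun j _ _ => hd j
    _ = t * malScore d t k := by rw [hS_eq, mul_div_cancel₀ _ (by positivity)]

end malScore

theorem malicious_in_benign_set_close_general (H Kb Km : ℕ) (hKm : Km < Kb)
    (p : ℕ) (hp : 1 ≤ p)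
    (v : Fin (Kb + Km) → Fin H → ℝ) (vbar : Fin H → ℝ) (r : ℝ)
    (hben : ∀ k : Fin (Kb + Km), (k : ℕ) < Kb → lpNorm p (fun i => v k i - vbar i) ≤ r)
    (B : Finset (Fin (Kb + Km))) (hBcard : B.card = Kb)
    (hBmin : ∀ k ∈ B, ∀ k' ∉ B,
      malScore (fun k1 k2 => lpNorm p (fun i => v k1 i - v k2 i)) (Kb - 1) k ≤
        malScore (fun k1 k2 => lpNorm p (fun i => v k1 i - v k2 i)) (Kb - 1) k')
    (m : Fin (Kb + Km)) (hmB : m ∈ B) (hm : Kb ≤ (m : ℕ)) :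
    lpNorm p (fun i => v m i - vbar i) ≤
      2 * ((Kb : ℝ) - 1) * r / ((Kb : ℝ) - (Km : ℝ)) + r := by
  set d : Fin (Kb + Km) → Fin (Kb + Km) → ℝ :=
    fun k1 k2 => lpNorm p (fun i => v k1 i - v k2 i)
  set A : Finset (Fin (Kb + Km)) := {k | (k : ℕ) < Kb}
  have hA : #A = Kb := by simp [A, Fin.card_filter_val_lt]
  have hmA : m ∉ A := by simpa [A] using hm
  have hbenA : ∀ j ∈ A, lpNorm p (fun i => v j i - vbar i) ≤ r :=
    fun j hj => hben j (by simpa [A] using hj)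
  obtain ⟨b, hbA, hbB⟩ :=
    exists_mem_notMem_of_card_le_of_mem_notMem (by rw [hA, hBcard]) hmB hmA
  have ht : 0 < Kb - 1 := by omega
  have hMb : malScore d (Kb - 1) b ≤ 2 * r := by
    refine malScore_le_of_forall_le d b ht (erase_subset_erase _ (subset_univ A))
      (by rw [card_erase_of_mem hbA, hA]) fun j hj => ?_
    rw [two_mul]
    exact lpNorm_sub_le_add_of_le hp (hbenA b hbA) (hbenA j (mem_of_mem_erase hj))
  have hMm : malScore d (Kb - 1) m ≤ 2 * r := (hBmin m hmB b hbB).trans hMb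
  set D := lpNorm p (fun i => v m i - vbar i)
  have hfar : ∀ j ∈ A, max (D - r) 0 ≤ d m j := fun j hj =>
    max_le (lpNorm_sub_sub_le hp (hbenA j hj)) (lpNorm_nonneg p _)
  have hAc : #Aᶜ = Km := by rw [card_compl, hA, Fintype.card_fin, Nat.add_sub_cancel_left]
  have hcount := sub_card_compl_mul_le_mul_malScore d m ht (by omega)
    (fun j => lpNorm_nonneg p _) hmA (le_max_right _ _) hfar
  rw [hAc, Nat.cast_pred (by omega)] at hcount
  have hKb : (1 : ℝ) ≤ Kb := by exact_mod_cast hKm.pos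
  have hKmKb : (Km : ℝ) < Kb := by exact_mod_cast hKm
  rw [← sub_le_iff_le_add, le_div_iff₀ (by linarith)]
  calc (D - r) * (Kb - Km) ≤ max (D - r) 0 * (Kb - Km) := by
        gcongr; exact le_max_left _ _
    _ = (Kb - 1 + 1 - Km) * max (D - r) 0 := by ring
    _ ≤ (Kb - 1) * malScore d (Kb - 1) m := hcount
    _ ≤ (Kb - 1) * (2 * r) := by gcongr
    _ = 2 * (Kb - 1) * r := by ring

/-- with `K = K_b + K_m` clients (`1 ≤ K_m < K_b`; clients with index
`< K_b` benign), if all benign characterization vectors lie within ℓ_p distance `r` of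
`v̄`, and `B` is a set of `K_b` clients whose maliciousness scores are the `K_b`
smallest, then every malicious client `m ∈ B` satisfies
`‖v⁽ᵐ⁾ - v̄‖_p ≤ 2(K_b - 1)·r/(K_b - K_m) + r`. -/
theorem malicious_in_benign_set_close (H Kb Km : ℕ) (hKm1 : 1 ≤ Km) (hKm : Km < Kb)
    (p : ℕ) (hp : 1 ≤ p)
    (v : Fin (Kb + Km) → Fin H → ℝ) (vbar : Fin H → ℝ) (r : ℝ) (hr : 0 ≤ r)
    (hben : ∀ k : Fin (Kb + Km), (k : ℕ) < Kb → lpNorm p (fun i => v k i - vbar i) ≤ r)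
    (B : Finset (Fin (Kb + Km))) (hBcard : B.card = Kb)
    (hBmin : ∀ k ∈ B, ∀ k' ∉ B,
      malScore (fun k1 k2 => lpNorm p (fun i => v k1 i - v k2 i)) (Kb - 1) k ≤
        malScore (fun k1 k2 => lpNorm p (fun i => v k1 i - v k2 i)) (Kb - 1) k')
    (m : Fin (Kb + Km)) (hmB : m ∈ B) (hm : Kb ≤ (m : ℕ)) :
    lpNorm p (fun i => v m i - vbar i) ≤
      2 * ((Kb : ℝ) - 1) * r / ((Kb : ℝ) - (Km : ℝ)) + r :=
  malicious_in_benign_set_close_general H Kb Km hKm p hp v vbar r hben B hBcard hBmin m hmB hm
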